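/- Let G be a multigraph with spanning subgraph G₀, let k ≥ 1 be a real number, and let l be an intersecting supermodular real function on subsets of V(G) with l(∅)=0. If d_{G₀}(A) ≥ (1/k)·d_G(A) for every vertex set A, then for every S ⊆ V(G): Θ_l(G₀ \ S) ≤ (1/k)·Θ_{kl}(G \ S) + Σ_{v∈S}(½ d_{G₀}(v) − (1/(2k)) d_G(v)) − e_{G₀}(S) + (1/k)·e_G(S). -/

import Mathlib

/-!
`Θ_m(H)` is the maximum of `Σ_{A∈P} m(A) − e_H(P)` over all partitions `P` of `V(H)`. Indeed, a
partition maximising the weight `Σ_{A∈P} (m(A) + e_H(A))` has only `m`-partition-connected parts,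
since refining a part that is not would increase the weight; and a partition into
`m`-partition-connected sets is coarsened by the component partition, whose weight is at least as
large because each component is itself `m`-partition-connected.

Testing `Θ_{kl}(G \ S)` against the `l`-components `P` of `G₀ \ S`, it remains to compare
`e_{G₀}(P)` with `e_G(P) / k`. Counting edge ends gives `2 e(P) + d(S) = Σ_{A∈P} d(A)`, so the
comparison follows from `d_{G₀} ≥ d_G / k` summed over the parts, and
`Σ_{v∈S} d(v) = 2 e(S) + d(S)` turns the boundary term `d(S)` into the degree sums of the bound.
-/

open Finset

namespace Paper

variable {V : Type*} [Fintype V] [DecidableEq V]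

/-- Bool test: the edge `e` has exactly one end in `X`. -/
def crossB (X : Finset V) : Sym2 V → Bool :=
  Sym2.lift ⟨fun a b => xor (decide (a ∈ X)) (decide (b ∈ X)), by
    intro a b; simp [Bool.xor_comm]⟩

/-- Bool test: both ends of the edge `e` lie in `X`. -/
def bothB (X : Finset V) : Sym2 V → Bool :=
  Sym2.lift ⟨fun a b => decide (a ∈ X) && decide (b ∈ X), by
    intro a b; simp [Bool.and_comm]⟩

/-- A finite multigraph on vertex set `V`: a multiset of loopless edges. -/
structure MGraph (V : Type*) where
  edges : Multiset (Sym2 V)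
  loopless : ∀ e ∈ edges, ¬ e.IsDiag

/-- Number of edges of the edge multiset `E` with exactly one end in `X`. -/
def cutE (E : Multiset (Sym2 V)) (X : Finset V) : ℕ :=
  (E.filter (fun e => crossB X e = true)).card

/-- `d_G(X)`: number of edges of `G` with exactly one end in `X`. -/
def cut (G : MGraph V) (X : Finset V) : ℕ := cutE G.edges X

/-- Degree of a vertex in a multigraph. -/
def deg (G : MGraph V) (v : V) : ℕ := cut G {v}

/-- Number of edges of `E` with both ends in `S`. -/
def insideE (E : Multiset (Sym2 V)) (S : Finset V) : ℕ :=
  (E.filter (fun e => bothB S e = true)).card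

/-- `P` is a partition of the vertex set `W` into nonempty parts. -/
def IsPartitionOf (W : Finset V) (P : Finset (Finset V)) : Prop :=
  (∀ A ∈ P, A.Nonempty) ∧ (∀ A ∈ P, ∀ B ∈ P, A ≠ B → Disjoint A B) ∧ P.sup id = W

/-- Number of edges of `E` joining different parts of `P`. -/
def ePart (E : Multiset (Sym2 V)) (P : Finset (Finset V)) : ℕ :=
  (E.filter (fun e => decide (∀ A ∈ P, bothB A e = false) = true)).card

/-- The edge multiset `E`, restricted to the vertex set `W`, is `l`-partition-connected:
for every partition `P` of `W`, the number of edges (inside `W`) joining different parts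
is at least `Σ_{A∈P} l(A) − l(W)`. -/
def LPCOn (E : Multiset (Sym2 V)) (W : Finset V) (l : Finset V → ℝ) : Prop :=
  ∀ P : Finset (Finset V), IsPartitionOf W P →
    (ePart (E.filter (fun e => bothB W e = true)) P : ℝ) ≥ (∑ A ∈ P, l A) - l W

/-- The multigraph `G` is `l`-partition-connected. -/
def LPC (G : MGraph V) (l : Finset V → ℝ) : Prop := LPCOn G.edges Finset.univ l

/-- `t`-partition-connectivity (constant function `t`). -/
def PC (G : MGraph V) (t : ℝ) : Prop := LPC G (fun _ => t)

/-- `m`-tree-connectivity, via the Nash-Williams–Tutte theorem identified with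
`m`-partition-connectivity. -/
def TreeConn (m : ℕ) (G : MGraph V) : Prop := PC G (m : ℝ)

/-- `G` is properly `c`-colorable. -/
def MColorable (c : ℕ) (G : MGraph V) : Prop :=
  ∃ f : V → Fin c, ∀ a b : V, s(a, b) ∈ G.edges → f a ≠ f b

/-- `G` is bipartite. -/
def MBipartite (G : MGraph V) : Prop := MColorable 2 G

/-- `P` is the partition of `W` into the (vertex sets of the) `l`-partition-connected
components of the graph with edge multiset `E` restricted to `W`: each part induces an
`l`-partition-connected subgraph, and every set inducing an `l`-partition-connected
subgraph lies inside one part. -/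
def IsLPCComponents (E : Multiset (Sym2 V)) (W : Finset V) (l : Finset V → ℝ)
    (P : Finset (Finset V)) : Prop :=
  IsPartitionOf W P ∧ (∀ A ∈ P, LPCOn E A l) ∧
    ∀ B ⊆ W, B.Nonempty → LPCOn E B l → ∃ A ∈ P, B ⊆ A

/-- `Θ_l` computed with respect to the component partition `P` of `W`. -/
noncomputable def ThetaVal (E : Multiset (Sym2 V)) (W : Finset V) (l : Finset V → ℝ)
    (P : Finset (Finset V)) : ℝ :=
  (∑ A ∈ P, l A) - (ePart (E.filter (fun e => bothB W e = true)) P : ℝ)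

/-- Intersecting supermodular set function. -/
def IntersectingSupermodular (l : Finset V → ℝ) : Prop :=
  ∀ A B : Finset V, (A ∩ B).Nonempty → l (A ∩ B) + l (A ∪ B) ≥ l A + l B

/-- Nonincreasing set function. -/
def Nonincreasing (l : Finset V → ℝ) : Prop :=
  ∀ A B : Finset V, A.Nonempty → A ⊆ B → l A ≥ l B

/-- Edge multiset of a simple graph. -/
noncomputable def SGedges (G : SimpleGraph V) : Multiset (Sym2 V) :=
  (Set.toFinite G.edgeSet).toFinset.val

/-- `m`-tree-connectivity of a simple graph, via partition-connectivity. -/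
noncomputable def TreeConnSG (m : ℕ) (G : SimpleGraph V) : Prop :=
  LPCOn (SGedges G) Finset.univ (fun _ => (m : ℝ))

/-- Degree in a simple graph. -/
noncomputable def degSG (G : SimpleGraph V) (v : V) : ℕ := Nat.card (G.neighborSet v)

/-- `G` is `t`-tough. -/
def Tough (t : ℝ) (G : SimpleGraph V) : Prop :=
  ∀ S : Finset V,
    (Nat.card ((G.induce ((↑S : Set V)ᶜ)).ConnectedComponent) : ℝ) ≤
      max 1 ((S.card : ℝ) / t)

/-- Bool test: the two ends of `e` receive different values under `f`. -/
def diffB {c : ℕ} (f : V → Fin c) : Sym2 V → Bool :=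
  Sym2.lift ⟨fun a b => decide (f a ≠ f b), by
    intro a b; simp [ne_comm]⟩

end Paper

open Paper

namespace Paper

theorem card_filter_eq_sum_map_ite {α : Type*} (E : Multiset α) (p : α → Prop)
    [DecidablePred p] : (E.filter p).card = (E.map fun e => if p e then 1 else 0).sum := by
  induction E using Multiset.induction_on with
  | empty => simp
  | cons e E ih => by_cases h : p e <;> simp [h, ih, add_comm]

variable {V : Type*} [DecidableEq V]

@[simp]
theorem bothB_mk_eq_true (X : Finset V) (a b : V) :
    bothB X s(a, b) = true ↔ a ∈ X ∧ b ∈ X := by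
  simp [bothB]

@[simp]
theorem crossB_mk_eq_true (X : Finset V) (a b : V) :
    crossB X s(a, b) = true ↔ ¬(a ∈ X ↔ b ∈ X) := by
  simp [crossB]

theorem bothB_mono {X Y : Finset V} (hXY : X ⊆ Y) {e : Sym2 V} (he : bothB X e = true) :
    bothB Y e = true := by
  induction e using Sym2.inductionOn with
  | hf a b => simp only [bothB_mk_eq_true] at he ⊢; exact ⟨hXY he.1, hXY he.2⟩

theorem ite_crossB_add_two_mul_ite_bothB (X : Finset V) (a b : V) :
    (if crossB X s(a, b) = true then 1 else 0) + 2 * (if bothB X s(a, b) = true then 1 else 0)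
      = (if a ∈ X then 1 else 0) + (if b ∈ X then 1 else 0) := by
  by_cases ha : a ∈ X <;> by_cases hb : b ∈ X <;> simp [ha, hb]

theorem insideE_singleton {E : Multiset (Sym2 V)} (hE : ∀ e ∈ E, ¬e.IsDiag) (v : V) :
    insideE E {v} = 0 := by
  rw [insideE, Multiset.card_eq_zero, Multiset.filter_eq_nil]
  intro e he hboth
  induction e using Sym2.inductionOn with
  | hf a b =>
    simp only [bothB_mk_eq_true, mem_singleton] at hboth
    exact hE _ he (by simp [hboth])

theorem cutE_univ_sdiff [Fintype V] (E : Multiset (Sym2 V)) (S : Finset V) :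
    cutE E (univ \ S) = cutE E S := by
  refine congrArg Multiset.card (Multiset.filter_congr fun e _ => ?_)
  induction e using Sym2.inductionOn with
  | hf a b => simp only [crossB_mk_eq_true, mem_sdiff, mem_univ, true_and]; tauto

namespace IsPartitionOf

variable {W : Finset V} {P : Finset (Finset V)}

theorem subset_of_mem (hP : IsPartitionOf W P) {A : Finset V} (hA : A ∈ P) : A ⊆ W := by
  rw [← hP.2.2]
  exact le_sup (f := id) hA

theorem exists_mem (hP : IsPartitionOf W P) {a : V} (ha : a ∈ W) : ∃ A ∈ P, a ∈ A := by
  rw [← hP.2.2] at ha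
  simpa using mem_sup.mp ha

theorem eq_of_mem_of_mem (hP : IsPartitionOf W P) {A B : Finset V} (hA : A ∈ P) (hB : B ∈ P)
    {a : V} (haA : a ∈ A) (haB : a ∈ B) : A = B :=
  by_contra fun h => disjoint_left.mp (hP.2.1 A hA B hB h) haA haB

theorem card_filter_mem (hP : IsPartitionOf W P) (a : V) :
    #{A ∈ P | a ∈ A} = if a ∈ W then 1 else 0 := by
  split_ifs with ha
  · obtain ⟨A, hA, haA⟩ := hP.exists_mem ha
    refine card_eq_one.mpr ⟨A, eq_singleton_iff_unique_mem.mpr ⟨?_, ?_⟩⟩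
    · exact mem_filter.mpr ⟨hA, haA⟩
    · intro B hB
      rw [mem_filter] at hB
      exact hP.eq_of_mem_of_mem hB.1 hA hB.2 haA
  · exact card_eq_zero.mpr <| filter_eq_empty_iff.mpr
      fun A hA haA => ha (hP.subset_of_mem hA haA)

theorem card_filter_mem_le_one (hP : IsPartitionOf W P) (a : V) : #{A ∈ P | a ∈ A} ≤ 1 := by
  rw [hP.card_filter_mem]
  split_ifs <;> simp

theorem ite_bothB_eq (hP : IsPartitionOf W P) (e : Sym2 V) :
    (if bothB W e = true then 1 else 0) =
      (if (∀ A ∈ P, bothB A e = false) ∧ bothB W e = true then 1 else 0)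
        + #{A ∈ P | bothB A e = true} := by
  induction e using Sym2.inductionOn with
  | hf a b =>
    by_cases h : ∃ A ∈ P, bothB A s(a, b) = true
    · obtain ⟨A, hA, hab⟩ := h
      have hW := bothB_mono (hP.subset_of_mem hA) hab
      have hle : #{B ∈ P | bothB B s(a, b) = true} ≤ 1 := by
        refine le_trans (card_le_card fun B hB => ?_) (hP.card_filter_mem_le_one a)
        simp only [mem_filter, bothB_mk_eq_true] at hB ⊢
        exact ⟨hB.1, hB.2.1⟩
      have hpos : 0 < #{B ∈ P | bothB B s(a, b) = true} :=
        card_pos.mpr ⟨A, mem_filter.mpr ⟨hA, hab⟩⟩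
      have hnot : ¬∀ B ∈ P, bothB B s(a, b) = false := fun hall => by simp [hall A hA] at hab
      simp only [hW, hnot, false_and, if_false, if_true]
      omega
    · simp only [not_exists, not_and, Bool.not_eq_true] at h
      rw [filter_false_of_mem fun B hB => by simp [h B hB]]
      simp only [and_iff_right h, card_empty, add_zero]

theorem sum_ite_crossB (hP : IsPartitionOf W P) (e : Sym2 V) :
    ∑ A ∈ P, (if crossB A e = true then 1 else 0) =
      2 * (if (∀ A ∈ P, bothB A e = false) ∧ bothB W e = true then 1 else 0)
        + (if crossB W e = true then 1 else 0) := by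
  induction e using Sym2.inductionOn with
  | hf a b =>
    have hparts : ∑ A ∈ P, (if crossB A s(a, b) = true then 1 else 0)
        + 2 * #{A ∈ P | bothB A s(a, b) = true}
        = (if a ∈ W then 1 else 0) + (if b ∈ W then 1 else 0) := by
      rw [card_filter, mul_sum, ← sum_add_distrib,
        sum_congr rfl fun A _ => ite_crossB_add_two_mul_ite_bothB A a b,
        sum_add_distrib, ← card_filter, ← card_filter,
        hP.card_filter_mem, hP.card_filter_mem]
    have hW := ite_crossB_add_two_mul_ite_bothB W a b
    have hboth := hP.ite_bothB_eq s(a, b)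
    omega

theorem disjoint_erase (hP : IsPartitionOf W P) {A : Finset V} (hA : A ∈ P)
    {PA : Finset (Finset V)} (hPA : IsPartitionOf A PA) : Disjoint (P.erase A) PA := by
  refine disjoint_left.mpr fun C hC hCA => ?_
  obtain ⟨v, hv⟩ := hPA.1 C hCA
  exact disjoint_left.mp (hP.2.1 C (mem_of_mem_erase hC) A hA
    (ne_of_mem_erase hC)) hv (hPA.subset_of_mem hCA hv)

theorem erase_union (hP : IsPartitionOf W P) {A : Finset V} (hA : A ∈ P)
    {PA : Finset (Finset V)} (hPA : IsPartitionOf A PA) :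
    IsPartitionOf W (P.erase A ∪ PA) := by
  refine ⟨fun C hC => ?_, fun C hC D hD hCD => ?_, ?_⟩
  · rcases mem_union.mp hC with hC | hC
    exacts [hP.1 C (mem_of_mem_erase hC), hPA.1 C hC]
  · rcases mem_union.mp hC with hC | hC <;> rcases mem_union.mp hD with hD | hD
    · exact hP.2.1 C (mem_of_mem_erase hC) D (mem_of_mem_erase hD) hCD
    · exact (hP.2.1 C (mem_of_mem_erase hC) A hA (ne_of_mem_erase hC)).mono_right
        (hPA.subset_of_mem hD)
    · exact (hP.2.1 A hA D (mem_of_mem_erase hD) (ne_of_mem_erase hD).symm).mono_left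
        (hPA.subset_of_mem hC)
    · exact hPA.2.1 C hC D hD hCD
  · rw [sup_union, hPA.2.2, ← hP.2.2, sup_comm]
    conv_rhs => rw [← insert_erase hA, sup_insert]
    rfl

theorem filter_eq_of_subset {Q : Finset (Finset V)} (hP : IsPartitionOf W P)
    (hQ : IsPartitionOf W Q) {φ : Finset V → Finset V} (hφQ : ∀ A ∈ P, φ A ∈ Q)
    (hφ : ∀ A ∈ P, A ⊆ φ A) {B : Finset V} (hB : B ∈ Q) :
    IsPartitionOf B {A ∈ P | φ A = B} := by
  refine ⟨fun A hA => hP.1 A (mem_filter.mp hA).1,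
    fun A hA C hC => hP.2.1 A (mem_filter.mp hA).1 C (mem_filter.mp hC).1, ?_⟩
  refine le_antisymm (Finset.sup_le fun A hA => ?_) fun v hv => ?_
  · obtain ⟨hAP, rfl⟩ := mem_filter.mp hA
    exact hφ A hAP
  · obtain ⟨A, hA, hvA⟩ := hP.exists_mem (hQ.subset_of_mem hB hv)
    have hAB : φ A = B := hQ.eq_of_mem_of_mem (hφQ A hA) hB (hφ A hA hvA) hv
    exact mem_sup.mpr ⟨A, mem_filter.mpr ⟨hA, hAB⟩, hvA⟩

end IsPartitionOf

theorem isPartitionOf_image_singleton (S : Finset V) : IsPartitionOf S (S.image singleton) := by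
  refine ⟨by simp, ?_, ?_⟩
  · simp only [mem_image]
    rintro _ ⟨a, -, rfl⟩ _ ⟨b, -, rfl⟩ hab
    exact disjoint_singleton.mpr fun h => hab (h ▸ rfl)
  · rw [sup_image, sup_eq_biUnion]
    exact biUnion_singleton_eq_self

section Counting

variable [Fintype V] {W : Finset V} {P : Finset (Finset V)}

theorem ePart_add_sum_insideE (hP : IsPartitionOf W P) (E : Multiset (Sym2 V)) :
    ePart (E.filter fun e => bothB W e = true) P + ∑ A ∈ P, insideE E A = insideE E W := by
  simp only [ePart, insideE, Multiset.filter_filter, decide_eq_true_eq,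
    card_filter_eq_sum_map_ite]
  rw [← Multiset.sum_map_sum, ← Multiset.sum_map_add]
  refine congrArg Multiset.sum (Multiset.map_congr rfl fun e _ => ?_)
  rw [hP.ite_bothB_eq e, card_filter]
  simp

theorem sum_cutE (hP : IsPartitionOf W P) (E : Multiset (Sym2 V)) :
    ∑ A ∈ P, cutE E A = 2 * ePart (E.filter fun e => bothB W e = true) P + cutE E W := by
  simp only [cutE, ePart, Multiset.filter_filter, decide_eq_true_eq,
    card_filter_eq_sum_map_ite]
  rw [← Multiset.sum_map_sum, ← Multiset.sum_map_mul_left, ← Multiset.sum_map_add]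
  -- `convert` only has to match the `Decidable` instances of the `∀` (`ePart` goes through `Fintype`)
  exact congrArg Multiset.sum (Multiset.map_congr rfl fun e _ => by convert hP.sum_ite_crossB e)

theorem sum_deg (G : MGraph V) (S : Finset V) :
    ∑ v ∈ S, deg G v = 2 * insideE G.edges S + cut G S := by
  have hS := isPartitionOf_image_singleton S
  have hinside : ePart (G.edges.filter fun e => bothB S e = true) (S.image singleton)
      = insideE G.edges S := by
    simpa [insideE_singleton G.loopless] using ePart_add_sum_insideE hS G.edges
  rw [← hinside, cut, ← sum_cutE hS, sum_image fun a _ b _ h => singleton_injective h]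
  rfl

theorem sum_cut_univ_sdiff (G : MGraph V) {S : Finset V}
    (hP : IsPartitionOf (univ \ S) P) :
    ∑ A ∈ P, (cut G A : ℝ)
      = 2 * ePart (G.edges.filter fun e => bothB (univ \ S) e = true) P + cut G S := by
  exact_mod_cast (sum_cutE hP G.edges).trans (by rw [cutE_univ_sdiff]; rfl)

end Counting

section Weight

variable [Fintype V] {E : Multiset (Sym2 V)} {W : Finset V} {m : Finset V → ℝ}
  {P Q R : Finset (Finset V)}

noncomputable def partWeight (E : Multiset (Sym2 V)) (m : Finset V → ℝ)
    (P : Finset (Finset V)) : ℝ :=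
  ∑ A ∈ P, (m A + insideE E A)

theorem thetaVal_eq_partWeight_sub (hP : IsPartitionOf W P) :
    ThetaVal E W m P = partWeight E m P - insideE E W := by
  have h : (ePart (E.filter fun e => bothB W e = true) P : ℝ) + ∑ A ∈ P, (insideE E A : ℝ)
      = insideE E W := by
    exact_mod_cast ePart_add_sum_insideE hP E
  rw [ThetaVal, partWeight, sum_add_distrib]
  linarith

theorem lpcOn_iff_partWeight_le :
    LPCOn E W m ↔ ∀ P, IsPartitionOf W P → partWeight E m P ≤ m W + insideE E W := by
  refine forall₂_congr fun P hP => ?_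
  have h := thetaVal_eq_partWeight_sub (E := E) (m := m) hP
  rw [ThetaVal] at h
  constructor <;> intro h' <;> linarith

theorem exists_forall_lpcOn_partWeight_le (hP : IsPartitionOf W P) :
    ∃ R, IsPartitionOf W R ∧ (∀ A ∈ R, LPCOn E A m) ∧ partWeight E m P ≤ partWeight E m R := by
  classical
  set partitions := {R ∈ W.powerset.powerset | IsPartitionOf W R}
  have mem_partitions {R} (hR : IsPartitionOf W R) : R ∈ partitions :=
    mem_filter.mpr
      ⟨mem_powerset.mpr fun A hA => mem_powerset.mpr (hR.subset_of_mem hA), hR⟩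
  obtain ⟨R, hR, hmax⟩ := exists_max_image partitions (partWeight E m)
    ⟨P, mem_partitions hP⟩
  replace hR := (mem_filter.mp hR).2
  refine ⟨R, hR, fun A hA => ?_, hmax P (mem_partitions hP)⟩
  by_contra hA'
  simp only [lpcOn_iff_partWeight_le, not_forall, not_le] at hA'
  obtain ⟨PA, hPA, hlt⟩ := hA'
  have hle := hmax _ (mem_partitions (hR.erase_union hA hPA))
  rw [partWeight, sum_union (hR.disjoint_erase hA hPA), partWeight,
    ← sum_erase_add _ _ hA] at hle
  rw [partWeight] at hlt
  linarith

theorem partWeight_le_of_forall_lpcOn (hQ : IsLPCComponents E W m Q) (hR : IsPartitionOf W R)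
    (hRc : ∀ A ∈ R, LPCOn E A m) : partWeight E m R ≤ partWeight E m Q := by
  choose! φ hφQ hφ using fun A hA => hQ.2.2 A (hR.subset_of_mem hA) (hR.1 A hA) (hRc A hA)
  rw [partWeight, ← sum_fiberwise_of_maps_to hφQ]
  exact sum_le_sum fun B hB => lpcOn_iff_partWeight_le.mp (hQ.2.1 B hB) _
    (hR.filter_eq_of_subset hQ.1 hφQ hφ hB)

theorem IsLPCComponents.thetaVal_le (hQ : IsLPCComponents E W m Q) (hP : IsPartitionOf W P) :
    ThetaVal E W m P ≤ ThetaVal E W m Q := by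
  obtain ⟨R, hR, hRc, hPR⟩ := exists_forall_lpcOn_partWeight_le (E := E) (m := m) hP
  rw [thetaVal_eq_partWeight_sub hP, thetaVal_eq_partWeight_sub hQ.1]
  linarith [partWeight_le_of_forall_lpcOn hQ hR hRc]

end Weight

end Paper

theorem stmt7_general {V : Type*} [Fintype V] [DecidableEq V] (G G₀ : MGraph V)
    (k : ℝ) (hk : 1 ≤ k)
    (l : Finset V → ℝ)
    (hdeg : ∀ A : Finset V, (cut G₀ A : ℝ) ≥ (1 / k) * (cut G A : ℝ)) :
    ∀ S : Finset V, ∀ P Q : Finset (Finset V),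
      IsLPCComponents G₀.edges (Finset.univ \ S) l P →
      IsLPCComponents G.edges (Finset.univ \ S) (fun A => k * l A) Q →
      ThetaVal G₀.edges (Finset.univ \ S) l P ≤
        (1 / k) * ThetaVal G.edges (Finset.univ \ S) (fun A => k * l A) Q
          + (∑ v ∈ S, ((deg G₀ v : ℝ) / 2 - (deg G v : ℝ) / (2 * k)))
          - (insideE G₀.edges S : ℝ) + (1 / k) * (insideE G.edges S : ℝ) := by
  intro S P Q hP hQ
  have hk0 : 0 < k := by linarith
  have hcut : (1 / k) * ∑ A ∈ P, (cut G A : ℝ) ≤ ∑ A ∈ P, (cut G₀ A : ℝ) := by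
    rw [mul_sum]
    exact sum_le_sum fun A _ => hdeg A
  rw [sum_cut_univ_sdiff G hP.1, sum_cut_univ_sdiff G₀ hP.1] at hcut
  have hdeg₀ : (∑ v ∈ S, (deg G₀ v : ℝ)) = 2 * insideE G₀.edges S + cut G₀ S := by
    exact_mod_cast sum_deg G₀ S
  have hdeg' : (∑ v ∈ S, (deg G v : ℝ)) = 2 * insideE G.edges S + cut G S := by
    exact_mod_cast sum_deg G S
  calc ThetaVal G₀.edges (univ \ S) l P
      ≤ ∑ A ∈ P, l A - (1 / k) * ePart (G.edges.filter fun e => bothB (univ \ S) e = true) P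
          + ((cut G₀ S : ℝ) - (1 / k) * cut G S) / 2 := by
        rw [ThetaVal]
        linarith
    _ = (1 / k) * ThetaVal G.edges (univ \ S) (fun A => k * l A) P
          + ((cut G₀ S : ℝ) - (1 / k) * cut G S) / 2 := by
        rw [ThetaVal, ← mul_sum]
        field_simp
    _ ≤ (1 / k) * ThetaVal G.edges (univ \ S) (fun A => k * l A) Q
          + ((cut G₀ S : ℝ) - (1 / k) * cut G S) / 2 := by
        gcongr
        exact hQ.thetaVal_le hP.1
    _ = _ := by
        rw [sum_sub_distrib, ← sum_div, ← sum_div, hdeg₀, hdeg']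
        field_simp
        ring

theorem stmt7 {V : Type*} [Fintype V] [DecidableEq V] (G G₀ : MGraph V)
    (hsp : G₀.edges ≤ G.edges) (k : ℝ) (hk : 1 ≤ k)
    (l : Finset V → ℝ) (hl0 : l ∅ = 0) (hsm : IntersectingSupermodular l)
    (hdeg : ∀ A : Finset V, (cut G₀ A : ℝ) ≥ (1 / k) * (cut G A : ℝ)) :
    ∀ S : Finset V, ∀ P Q : Finset (Finset V),
      IsLPCComponents G₀.edges (Finset.univ \ S) l P →
      IsLPCComponents G.edges (Finset.univ \ S) (fun A => k * l A) Q →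
      ThetaVal G₀.edges (Finset.univ \ S) l P ≤
        (1 / k) * ThetaVal G.edges (Finset.univ \ S) (fun A => k * l A) Q
          + (∑ v ∈ S, ((deg G₀ v : ℝ) / 2 - (deg G v : ℝ) / (2 * k)))
          - (insideE G₀.edges S : ℝ) + (1 / k) * (insideE G.edges S : ℝ) :=
  stmt7_general G G₀ k hk l hdeg
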